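/- (Squaring) Let M > 0 and x ∈ ℝ^D with ‖x‖_∞ ≤ M. Let H ∈ ℝ^{5×ℓ} with ℓ ≥ 2D be the embedding matrix whose first row is (x¹,…,x^D, 0,…,0), second row zero, rows 3–4 positional encodings, fifth row all ones. Then there exist three transformer blocks B₁, B₂, B₃ ∈ 𝓑(D, 6, 5) such that B₃ ∘ B₂ ∘ B₁(H) equals H except that the first-row entries in columns D+1,…,2D are (x¹)²,…,(x^D)², with weight bound ‖θ_B‖_∞ ≤ O(ℓ² M² ‖H‖²_{∞,∞}) for each block. -/

import Mathlib

open scoped BigOperators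
open Metric Set MeasureTheory
open scoped Matrix

namespace Paper

noncomputable section

/-- ReLU activation. -/
def relu (x : ℝ) : ℝ := max x 0

/-- Euclidean space `ℝ^D` with the `ℓ²` norm. -/
abbrev Euc (D : ℕ) := EuclideanSpace ℝ (Fin D)

/-- Maximum absolute entry of a matrix (`‖H‖_{∞,∞}`). -/
def matSup {m n : ℕ} (H : Matrix (Fin m) (Fin n) ℝ) : ℝ := ⨆ i, ⨆ j, |H i j|

/-- Sup norm `‖x‖_∞` of a vector. -/
def supNorm {D : ℕ} (x : Fin D → ℝ) : ℝ := ⨆ i, |x i|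

/-- An attention head: query, key and value matrices. -/
structure Head (de : ℕ) where
  Q : Matrix (Fin de) (Fin de) ℝ
  K : Matrix (Fin de) (Fin de) ℝ
  V : Matrix (Fin de) (Fin de) ℝ

/-- Action of an attention head on an embedding matrix:
`A(H) = V H σ((K H)ᵀ Q H)` with `σ = ReLU`. -/
def Head.eval {de : ℕ} (A : Head de) {ℓ : ℕ} (H : Matrix (Fin de) (Fin ℓ) ℝ) :
    Matrix (Fin de) (Fin ℓ) ℝ :=
  A.V * H * ((A.K * H)ᵀ * (A.Q * H)).map relu

/-- Tokenwise action of an attention head: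
`A(h_t) = Σ_j σ(⟨Q h_t, K h_j⟩) V h_j`. -/
def Head.tokenEval {de ℓ : ℕ} (A : Head de) (H : Matrix (Fin de) (Fin ℓ) ℝ)
    (t : Fin ℓ) : Fin de → ℝ := fun i =>
  ∑ j : Fin ℓ,
    relu (∑ k, A.Q.mulVec (fun r => H r t) k * A.K.mulVec (fun r => H r j) k) *
      A.V.mulVec (fun r => H r j) i

/-- Maximum weight magnitude of an attention head. -/
def Head.wnorm {de : ℕ} (A : Head de) : ℝ := matSup A.Q ⊔ matSup A.K ⊔ matSup A.V

/-- A fully-connected (tokenwise) ReLU feed-forward network of depth `L`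
and hidden width `w` on embedding dimension `de`. -/
structure FFN (de w L : ℕ) where
  Win : Matrix (Fin w) (Fin de) ℝ
  bin : Fin w → ℝ
  Wmid : Fin L → Matrix (Fin w) (Fin w) ℝ
  bmid : Fin L → Fin w → ℝ
  Wout : Matrix (Fin de) (Fin w) ℝ
  bout : Fin de → ℝ

/-- Evaluation of a feed-forward ReLU network on one token. -/
def FFN.eval {de w L : ℕ} (f : FFN de w L) (x : Fin de → ℝ) : Fin de → ℝ :=
  let h0 : Fin w → ℝ := fun i => relu (∑ j, f.Win i j * x j + f.bin i)
  let hL : Fin w → ℝ := (List.finRange L).foldl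
    (fun h k => fun i => relu (∑ j, f.Wmid k i j * h j + f.bmid k i)) h0
  fun i => ∑ j, f.Wout i j * hL j + f.bout i

/-- Maximum weight magnitude of a feed-forward network. -/
def FFN.wnorm {de w L : ℕ} (f : FFN de w L) : ℝ :=
  matSup f.Win ⊔ (⨆ i, |f.bin i|) ⊔ (⨆ k, matSup (f.Wmid k)) ⊔
    (⨆ k, ⨆ i, |f.bmid k i|) ⊔ matSup f.Wout ⊔ (⨆ i, |f.bout i|)

/-- A two-layer feed-forward ReLU network. -/
structure TwoLayerFFN (de w : ℕ) where
  W1 : Matrix (Fin w) (Fin de) ℝ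
  b1 : Fin w → ℝ
  W2 : Matrix (Fin de) (Fin w) ℝ
  b2 : Fin de → ℝ

def TwoLayerFFN.eval {de w : ℕ} (f : TwoLayerFFN de w) (x : Fin de → ℝ) :
    Fin de → ℝ := fun i =>
  ∑ j, f.W2 i j * relu (∑ k, f.W1 j k * x k + f.b1 j) + f.b2 i

def TwoLayerFFN.wnorm {de w : ℕ} (f : TwoLayerFFN de w) : ℝ :=
  matSup f.W1 ⊔ (⨆ i, |f.b1 i|) ⊔ matSup f.W2 ⊔ (⨆ i, |f.b2 i|)

/-- A transformer block `B(H) = FFN(MHA(H)+H) + MHA(H) + H` with `m` attention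
heads and a tokenwise feed-forward network of depth `L` and width `w`;
this formalizes the class `𝓑(m, L, de)`. -/
structure Block (de m w L : ℕ) where
  heads : Fin m → Head de
  ffn : FFN de w L

def Block.eval {de m w L : ℕ} (B : Block de m w L) {ℓ : ℕ}
    (H : Matrix (Fin de) (Fin ℓ) ℝ) : Matrix (Fin de) (Fin ℓ) ℝ :=
  let H1 := (∑ j, (B.heads j).eval H) + H
  Matrix.of (fun i t => B.ffn.eval (fun r => H1 r t) i) + H1

def Block.wnorm {de m w L : ℕ} (B : Block de m w L) : ℝ :=
  (⨆ j, (B.heads j).wnorm) ⊔ B.ffn.wnorm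

/-- A transformer network: linear embedding, positional encoding, `LT` transformer
blocks (each with `mT` heads and FFNs of depth `LF`, width `wF`), and a decoding
layer returning the first entry of the last column. -/
structure TransformerNet (D LT mT de ℓ LF wF : ℕ) where
  emb : Fin de → Fin ℓ → Fin D → ℝ
  PE : Matrix (Fin de) (Fin ℓ) ℝ
  blocks : Fin LT → Block de mT wF LF

def TransformerNet.eval {D LT mT de ℓ LF wF : ℕ}
    (T : TransformerNet D LT mT de ℓ LF wF) (x : Fin D → ℝ) : ℝ :=
  let H0 : Matrix (Fin de) (Fin ℓ) ℝ :=
    T.PE + Matrix.of fun i t => ∑ j, T.emb i t j * x j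
  let HL := (List.finRange LT).foldl (fun H k => (T.blocks k).eval H) H0
  if h : 0 < de ∧ 0 < ℓ then HL ⟨0, h.1⟩ ⟨ℓ - 1, Nat.sub_lt h.2 Nat.one_pos⟩ else 0

/-- Maximum weight magnitude `‖θ‖_∞` of a transformer network. -/
def TransformerNet.wnorm {D LT mT de ℓ LF wF : ℕ}
    (T : TransformerNet D LT mT de ℓ LF wF) : ℝ :=
  (⨆ i, ⨆ t, ⨆ j, |T.emb i t j|) ⊔ matSup T.PE ⊔ (⨆ k, (T.blocks k).wnorm)

/-- Membership in the transformer class `𝒯(L_T, m_T, d_embed, ℓ, L_FFN, w_FFN, R, κ)`: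
sup-norm output bound `R` and weight magnitudes at most `κ`. -/
def TransformerNet.inClass {D LT mT de ℓ LF wF : ℕ}
    (T : TransformerNet D LT mT de ℓ LF wF) (R κ : ℝ) : Prop :=
  (∀ x : Fin D → ℝ, |T.eval x| ≤ R) ∧ T.wnorm ≤ κ

/-- Medial axis of a set. -/
def medialAxis {D : ℕ} (S : Set (Euc D)) : Set (Euc D) :=
  {x | ∃ p ∈ S, ∃ q ∈ S, p ≠ q ∧
    dist p x = infDist x S ∧ dist q x = infDist x S}

/-- Local reach `τ_M(v)`. -/
def localReach {D : ℕ} (S : Set (Euc D)) (v : Euc D) : ℝ :=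
  infDist v (medialAxis S)

/-- Reach `τ_M` of a set. -/
def reach {D : ℕ} (S : Set (Euc D)) : ℝ := ⨅ v ∈ S, localReach S v

/-- Geodesic distance on `S`: infimum of lengths of `C¹` curves in `S`. -/
def geoDist {D : ℕ} (S : Set (Euc D)) (v v' : Euc D) : ℝ :=
  sInf {l : ℝ | ∃ γ : ℝ → Euc D, (∀ t ∈ Icc (0:ℝ) 1, γ t ∈ S) ∧
    ContDiffOn ℝ 1 γ (Icc 0 1) ∧ γ 0 = v ∧ γ 1 = v' ∧
    l = ∫ t in (0:ℝ)..1, ‖deriv γ t‖}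

/-- Orthogonal projection onto `S` (a choice of nearest point, when one exists). -/
def projOn {D : ℕ} (S : Set (Euc D)) (x : Euc D) : Euc D :=
  Classical.epsilon fun y => y ∈ S ∧ dist x y = infDist x S

/-- A nonempty, compact, connected `d`-dimensional manifold `M ⊆ [0,1]^D`,
together with a choice of orthonormal tangent frames `P(v)`. -/
structure GoodManifold (D d : ℕ) where
  carrier : Set (Euc D)
  nonempty : carrier.Nonempty
  compact : IsCompact carrier
  connected : IsConnected carrier
  subset_cube : ∀ x ∈ carrier, ∀ i, x i ∈ Icc (0:ℝ) 1
  locallyEuclidean : ∀ v ∈ carrier, ∃ U : Set (Euc D), IsOpen U ∧ v ∈ U ∧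
    ∃ V : Set (EuclideanSpace ℝ (Fin d)), IsOpen V ∧
      Nonempty (↥(carrier ∩ U) ≃ₜ ↥V)
  frame : Euc D → Matrix (Fin D) (Fin d) ℝ
  frame_orthonormal : ∀ v ∈ carrier, (frame v)ᵀ * frame v = 1

/-- The tubular region `M(q)` around the manifold. -/
def GoodManifold.tube {D d : ℕ} (M : GoodManifold D d) (q : ℝ) : Set (Euc D) :=
  {x | ∃ v ∈ M.carrier, ∃ u : Euc D, x = v + u ∧
    (M.frame v)ᵀ.mulVec (fun i => u i) = 0 ∧
    ‖u‖ < q * localReach M.carrier v}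

/-- The volume `Vol(M)`: the `d`-dimensional Hausdorff measure of the carrier. -/
def vol {D d : ℕ} (M : GoodManifold D d) : ℝ :=
  (MeasureTheory.Measure.hausdorffMeasure (d : ℝ) M.carrier).toReal

/-- A maximal `δ`-separated net `{z₁,…,z_K}` of `M` w.r.t. geodesic distance. -/
structure SepNet {D d : ℕ} (M : GoodManifold D d) (δ : ℝ) (K : ℕ) where
  z : Fin K → Euc D
  mem : ∀ i, z i ∈ M.carrier
  sep : ∀ i j, i ≠ j → δ < geoDist M.carrier (z i) (z j)
  maximal : ∀ y ∈ M.carrier, ∃ i, geoDist M.carrier y (z i) ≤ δ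

/-- The bump functions `η̃_i` built from the net, with `p = (1+q)/2` and
`h = 6/(1 - q p⁻¹)`. -/
def etaTilde {D d K : ℕ} (M : GoodManifold D d) (q δ : ℝ) (N : SepNet M δ K)
    (i : Fin K) (x : Euc D) : ℝ :=
  relu (1 - (dist x (N.z i) / (((1 + q) / 2) * localReach M.carrier (N.z i))) ^ 2
    - (Real.sqrt (∑ j, (∑ r, M.frame (N.z i) r j * (x r - N.z i r)) ^ 2)
        / ((6 / (1 - q / ((1 + q) / 2))) * δ)) ^ 2)

/-- The normalized partition of unity `η_i = η̃_i / ‖η̃‖₁`. -/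
def etaFun {D d K : ℕ} (M : GoodManifold D d) (q δ : ℝ) (N : SepNet M δ K)
    (i : Fin K) (x : Euc D) : ℝ :=
  etaTilde M q δ N i x / ∑ j, etaTilde M q δ N j x

/-- Embedding matrix predicate for `d_embed = 5`: second row zero, rows 3–4 the
sinusoidal positional encodings, fifth row all ones. -/
def IsEmbed5 {ℓ : ℕ} (H : Matrix (Fin 5) (Fin ℓ) ℝ) : Prop :=
  (∀ t, H 1 t = 0) ∧
  (∀ t : Fin ℓ, H 2 t = Real.cos ((((t : ℕ) : ℝ) + 1) * Real.pi / (2 * ℓ))) ∧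
  (∀ t : Fin ℓ, H 3 t = Real.sin ((((t : ℕ) : ℝ) + 1) * Real.pi / (2 * ℓ))) ∧
  (∀ t, H 4 t = 1)

/-- Embedding matrix predicate for general `d_embed = e + 5 ≥ 5`: rows
`d_embed−2, d_embed−1` are the positional encodings and the last row is all ones. -/
def IsEmbedG (e ℓ : ℕ) (H : Matrix (Fin (e + 5)) (Fin ℓ) ℝ) : Prop :=
  (∀ t : Fin ℓ, H ⟨e + 2, by omega⟩ t
      = Real.cos ((((t : ℕ) : ℝ) + 1) * Real.pi / (2 * ℓ))) ∧
  (∀ t : Fin ℓ, H ⟨e + 3, by omega⟩ t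
      = Real.sin ((((t : ℕ) : ℝ) + 1) * Real.pi / (2 * ℓ))) ∧
  (∀ t, H ⟨e + 4, by omega⟩ t = 1)

/-!
A head of the first block copies the entry `x` of column `j` into row `1` of column `D + j`:
its score of key `i` against query `t` is
`λ H₀ᵢ + R (cos (θ_t - θ_{D+j}) - 1) + R (cos (θᵢ - θⱼ) - 1)`, with `θ` the positional angles.
Distinct angles satisfy `cos (θ - θ') ≤ 1 - 1/(2ℓ²)`, so for large `R` only the pair `(j, D + j)`
scores positively, and the head writes a multiple of `x relu (λ x)` there. The second block does
the same with `-λ`, and `x relu (λ x) - x relu (-λ x) = λ x²`. The third block is a ReLU network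
reading the nonnegative row `1`: it adds `1/λ` times it to row `0` and clears it. Wide hidden layers
amplify their input, so this network, and hence all three blocks, can be built with weights below
any positive bound.
-/

open Real

lemma relu_of_nonneg {x : ℝ} (h : 0 ≤ x) : relu x = x := max_eq_left h

lemma relu_of_nonpos {x : ℝ} (h : x ≤ 0) : relu x = 0 := max_eq_right h

lemma relu_sub_relu_neg (x : ℝ) : relu x - relu (-x) = x := by
  rcases le_total 0 x with h | h
  · rw [relu_of_nonneg h, relu_of_nonpos (neg_nonpos.2 h), sub_zero]
  · rw [relu_of_nonpos h, relu_of_nonneg (neg_nonneg.2 h), zero_sub, neg_neg]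

lemma le_matSup {m n : ℕ} (H : Matrix (Fin m) (Fin n) ℝ) (i : Fin m) (j : Fin n) :
    |H i j| ≤ matSup H :=
  (le_ciSup (Finite.bddAbove_range _) j).trans
    (le_ciSup (f := fun i => ⨆ j, |H i j|) (Finite.bddAbove_range _) i)

lemma matSup_le {m n : ℕ} {H : Matrix (Fin m) (Fin n) ℝ} {c : ℝ} (h : ∀ i j, |H i j| ≤ c)
    (hc : 0 ≤ c) : matSup H ≤ c :=
  Real.iSup_le (fun i => Real.iSup_le (h i) hc) hc

lemma matSup_zero {m n : ℕ} : matSup (0 : Matrix (Fin m) (Fin n) ℝ) = 0 := by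
  simp [matSup]

instance {de : ℕ} : Zero (Head de) := ⟨⟨0, 0, 0⟩⟩

instance {de w L : ℕ} : Zero (FFN de w L) := ⟨⟨0, 0, 0, 0, 0, 0⟩⟩

@[simp] lemma Head.eval_zero {de ℓ : ℕ} (H : Matrix (Fin de) (Fin ℓ) ℝ) :
    (0 : Head de).eval H = 0 := by
  show (Head.mk 0 0 0).eval H = 0
  simp [Head.eval]

@[simp] lemma FFN.eval_zero {de w L : ℕ} (v : Fin de → ℝ) : (0 : FFN de w L).eval v = 0 := by
  show (FFN.mk 0 0 0 0 0 0).eval v = 0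
  funext i
  simp [FFN.eval]

@[simp] lemma Head.wnorm_zero {de : ℕ} : (0 : Head de).wnorm = 0 := by
  show (Head.mk 0 0 0).wnorm = 0
  simp [Head.wnorm, matSup_zero]

@[simp] lemma FFN.wnorm_zero {de w L : ℕ} : (0 : FFN de w L).wnorm = 0 := by
  show (FFN.mk 0 0 0 0 0 0).wnorm = 0
  simp [FFN.wnorm, matSup_zero]

lemma Block.eval_mk_zero_ffn {de m w L ℓ : ℕ} (heads : Fin m → Head de)
    (H : Matrix (Fin de) (Fin ℓ) ℝ) :
    (Block.mk heads (0 : FFN de w L)).eval H = ∑ j, (heads j).eval H + H := by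
  ext i t
  simp [Block.eval]

lemma Block.eval_mk_zero_heads {de m w L ℓ : ℕ} (f : FFN de w L)
    (H : Matrix (Fin de) (Fin ℓ) ℝ) :
    (Block.mk (0 : Fin m → Head de) f).eval H =
      Matrix.of (fun i t => f.eval (fun r => H r t) i) + H := by
  simp [Block.eval]

lemma Block.wnorm_le {de m w L : ℕ} {B : Block de m w L} {b : ℝ}
    (hheads : ∀ j, (B.heads j).wnorm ≤ b) (hffn : B.ffn.wnorm ≤ b) (hb : 0 ≤ b) : B.wnorm ≤ b :=
  sup_le (Real.iSup_le hheads hb) hffn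

lemma Head.eval_apply_of_score_nonpos {de ℓ : ℕ} (A : Head de) (H : Matrix (Fin de) (Fin ℓ) ℝ)
    {s τ : Fin ℓ} (hscore : ∀ j t, (j, t) ≠ (s, τ) → ((A.K * H)ᵀ * (A.Q * H)) j t ≤ 0)
    (i : Fin de) (t : Fin ℓ) :
    A.eval H i t =
      if t = τ then (A.V * H) i s * relu (((A.K * H)ᵀ * (A.Q * H)) s τ) else 0 := by
  have hzero : ∀ j, (j, t) ≠ (s, τ) → relu (((A.K * H)ᵀ * (A.Q * H)) j t) = 0 :=
    fun j h => relu_of_nonpos (hscore j t h)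
  rw [Head.eval, Matrix.mul_apply]
  split_ifs with ht
  · subst ht
    refine Finset.sum_eq_single s (fun j _ hj => ?_) (by simp)
    rw [Matrix.map_apply, hzero j (by simp [hj]), mul_zero]
  · exact Finset.sum_eq_zero fun j _ => by rw [Matrix.map_apply, hzero j (by simp [ht]), mul_zero]

lemma foldl_const_of_step {α ι : Type*} (f : (α → ℝ) → ι → α → ℝ) {m : ℝ} (hm : 0 ≤ m)
    (hf : ∀ a, 0 ≤ a → ∀ k, f (fun _ => a) k = fun _ => m * a) (l : List ι) {a : ℝ}
    (ha : 0 ≤ a) : l.foldl f (fun _ => a) = fun _ => m ^ l.length * a := by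
  induction l generalizing a with
  | nil => simp
  | cons k l ih =>
    rw [List.foldl_cons, hf a ha k, ih (mul_nonneg hm ha), List.length_cons, pow_succ, mul_assoc]

def FFN.relay {de w L : ℕ} (r : Fin de) (g : ℝ) (c : Fin de → ℝ) : FFN de w L where
  Win := Matrix.of fun _ k => if k = r then g else 0
  bin := 0
  Wmid := fun _ => Matrix.of fun _ _ => g
  bmid := 0
  Wout := Matrix.of fun i _ => c i / (w * g) ^ (L + 1)
  bout := 0

lemma FFN.relay_eval {de w L : ℕ} (hw : 0 < w) (r : Fin de) {g : ℝ} (hg : 0 < g)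
    (c : Fin de → ℝ) {v : Fin de → ℝ} (hv : 0 ≤ v r) :
    (FFN.relay r g c : FFN de w L).eval v = v r • c := by
  have hwg : 0 < (w : ℝ) * g := mul_pos (by exact_mod_cast hw) hg
  have hfold := foldl_const_of_step
    (fun (h : Fin w → ℝ) (k : Fin L) (i : Fin w) =>
      relu (∑ j, (FFN.relay r g c : FFN de w L).Wmid k i j * h j +
        (FFN.relay r g c : FFN de w L).bmid k i)) hwg.le
    (fun a ha k => by
      funext i
      simp only [FFN.relay, Matrix.of_apply, Finset.sum_const, Finset.card_univ, Fintype.card_fin,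
        nsmul_eq_mul, Pi.zero_apply, add_zero]
      rw [relu_of_nonneg (by positivity)]
      ring) (List.finRange L) (mul_nonneg hg.le hv)
  have hin : (fun i : Fin w => relu (∑ j, (FFN.relay r g c : FFN de w L).Win i j * v j +
      (FFN.relay r g c : FFN de w L).bin i)) = fun _ => g * v r := by
    funext i
    simp [FFN.relay, relu_of_nonneg (mul_nonneg hg.le hv)]
  funext i
  simp only [FFN.eval]
  rw [hin, hfold]
  simp only [FFN.relay, Matrix.of_apply, List.length_finRange, Finset.sum_const, Finset.card_univ,
    Fintype.card_fin, nsmul_eq_mul, Pi.zero_apply, add_zero, Pi.smul_apply, smul_eq_mul]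
  field_simp
  ring

lemma FFN.relay_wnorm_le {de w L : ℕ} (r : Fin de) {g b : ℝ} (hg : 0 ≤ g) (hgb : g ≤ b)
    {c : Fin de → ℝ} (hc : ∀ i, |c i| ≤ b * (w * g) ^ (L + 1)) :
    (FFN.relay r g c : FFN de w L).wnorm ≤ b := by
  have hb : 0 ≤ b := hg.trans hgb
  have hgb' : |g| ≤ b := by rwa [abs_of_nonneg hg]
  refine sup_le (sup_le (sup_le (sup_le (sup_le ?_ ?_) ?_) ?_) ?_) ?_
  · refine matSup_le (fun i k => ?_) hb
    simp only [FFN.relay, Matrix.of_apply]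
    split_ifs <;> simp [hgb', hb]
  · simpa [FFN.relay] using hb
  · exact Real.iSup_le (fun _ => matSup_le (fun _ _ => hgb') hb) hb
  · simpa [FFN.relay] using hb
  · refine matSup_le (fun i _ => ?_) hb
    have hpow : 0 ≤ ((w : ℝ) * g) ^ (L + 1) := by positivity
    simp only [FFN.relay, Matrix.of_apply, abs_div, abs_of_nonneg hpow]
    exact div_le_of_le_mul₀ hpow hb (hc i)
  · simpa [FFN.relay] using hb

lemma FFN.exists_relay_wnorm_le {de L : ℕ} (r : Fin de) {b : ℝ} (hb : 0 < b) (c : Fin de → ℝ) :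
    ∃ w : ℕ, 0 < w ∧ (FFN.relay r b c : FFN de w L).wnorm ≤ b := by
  set S := ∑ i, |c i|
  obtain ⟨w, hw⟩ := exists_nat_ge ((1 + S / b) / b)
  have hwb : 1 + S / b ≤ w * b := (div_le_iff₀ hb).1 hw
  have hS : 0 ≤ S / b := by positivity
  have hone : 1 ≤ (w : ℝ) * b := by linarith
  refine ⟨w, ?_, FFN.relay_wnorm_le r hb.le le_rfl fun i => ?_⟩
  · refine Nat.pos_of_ne_zero fun h => ?_
    simp [h] at hone
    linarith
  · calc |c i| ≤ S := Finset.single_le_sum (fun j _ => abs_nonneg (c j)) (Finset.mem_univ i)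
      _ = b * (S / b) := (mul_div_cancel₀ S hb.ne').symm
      _ ≤ b * (w * b) := by gcongr; linarith
      _ ≤ b * (w * b) ^ (L + 1) := by gcongr; exact le_self_pow₀ hone (Nat.succ_ne_zero L)

lemma Block.eval_mk_relay {de m w L ℓ : ℕ} (hw : 0 < w) (r : Fin de) {g : ℝ} (hg : 0 < g)
    (c : Fin de → ℝ) {G : Matrix (Fin de) (Fin ℓ) ℝ} (hG : ∀ t, 0 ≤ G r t) :
    (Block.mk (0 : Fin m → Head de) (FFN.relay r g c : FFN de w L)).eval G =
      Matrix.of (fun i t => G r t * c i) + G := by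
  rw [Block.eval_mk_zero_heads]
  ext i t
  simp [FFN.relay_eval hw r hg c (v := fun r => G r t) (hG t)]

def posAngle (ℓ t : ℕ) : ℝ := ((t : ℝ) + 1) * π / (2 * ℓ)

lemma cos_posAngle_sub_le {ℓ a b : ℕ} (ha : a < ℓ) (hb : b < ℓ) (hab : a ≠ b) :
    cos (posAngle ℓ a - posAngle ℓ b) ≤ 1 - 1 / (2 * ℓ ^ 2) := by
  have hℓ : (0 : ℝ) < ℓ := by exact_mod_cast (Nat.zero_lt_of_lt ha)
  have hdiff : posAngle ℓ a - posAngle ℓ b = ((a : ℝ) - b) / (2 * ℓ) * π := by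
    unfold posAngle; ring
  have hsep : 1 ≤ ((a : ℝ) - b) ^ 2 := by
    rcases lt_or_gt_of_ne hab with h | h
    · have : (a : ℝ) + 1 ≤ b := by exact_mod_cast h
      nlinarith
    · have : (b : ℝ) + 1 ≤ a := by exact_mod_cast h
      nlinarith
  have hsmall : |(a : ℝ) - b| ≤ 2 * ℓ := by
    have : (a : ℝ) < ℓ := by exact_mod_cast ha
    have : (b : ℝ) < ℓ := by exact_mod_cast hb
    rw [abs_le]
    constructor <;> linarith [(a.cast_nonneg : (0 : ℝ) ≤ a), (b.cast_nonneg : (0 : ℝ) ≤ b)]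
  refine (cos_le_one_sub_mul_cos_sq ?_).trans ?_
  · rw [hdiff, abs_mul, abs_div, abs_of_pos pi_pos, abs_of_pos (by positivity : (0:ℝ) < 2 * ℓ)]
    exact mul_le_of_le_one_left pi_pos.le ((div_le_one (by positivity)).2 hsmall)
  · rw [hdiff, sub_le_sub_iff_left]
    field_simp
    nlinarith [pi_pos]

def selectHead (ℓ : ℕ) (s τ : Fin ℓ) (a R g v : ℝ) : Head 5 where
  Q := !![0, 0, 0, 0, g; 0, 0, g, 0, 0; 0, 0, 0, g, 0; 0, 0, 0, 0, g; 0, 0, 0, 0, g]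
  K := !![a / g, 0, 0, 0, -2 * R / g;
          0, 0, 0, 0, R * cos (posAngle ℓ τ) / g;
          0, 0, 0, 0, R * sin (posAngle ℓ τ) / g;
          0, 0, R * cos (posAngle ℓ s) / g, 0, 0;
          0, 0, 0, R * sin (posAngle ℓ s) / g, 0]
  V := !![0, 0, 0, 0, 0; v, 0, 0, 0, 0; 0, 0, 0, 0, 0; 0, 0, 0, 0, 0; 0, 0, 0, 0, 0]

lemma IsEmbedG.rows {ℓ : ℕ} {H : Matrix (Fin 5) (Fin ℓ) ℝ} (hH : IsEmbedG 0 ℓ H) :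
    (∀ t : Fin ℓ, H 2 t = cos (posAngle ℓ t)) ∧ (∀ t : Fin ℓ, H 3 t = sin (posAngle ℓ t)) ∧
      ∀ t, H 4 t = 1 :=
  hH

lemma selectHead_score {ℓ : ℕ} {H : Matrix (Fin 5) (Fin ℓ) ℝ} (hH : IsEmbedG 0 ℓ H)
    (s τ : Fin ℓ) (a R : ℝ) {g : ℝ} (hg : g ≠ 0) (v : ℝ) (j t : Fin ℓ) :
    (((selectHead ℓ s τ a R g v).K * H)ᵀ * ((selectHead ℓ s τ a R g v).Q * H)) j t =
      a * H 0 j + R * (cos (posAngle ℓ t - posAngle ℓ τ) - 1) +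
        R * (cos (posAngle ℓ j - posAngle ℓ s) - 1) := by
  obtain ⟨h2, h3, h4⟩ := hH.rows
  simp [selectHead, Matrix.mul_apply, Matrix.vecMul, dotProduct, Fin.sum_univ_five, h2, h3, h4,
    cos_sub]
  field_simp
  ring

lemma selectHead_score_nonpos {ℓ : ℕ} {H : Matrix (Fin 5) (Fin ℓ) ℝ} (hH : IsEmbedG 0 ℓ H)
    {s τ : Fin ℓ} {a R g : ℝ} (hg : g ≠ 0) (v : ℝ) (hrow0 : ∀ t, 2 * ℓ ^ 2 * |a * H 0 t| ≤ R)
    {j t : Fin ℓ} (hjt : (j, t) ≠ (s, τ)) :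
    (((selectHead ℓ s τ a R g v).K * H)ᵀ * ((selectHead ℓ s τ a R g v).Q * H)) j t ≤ 0 := by
  have hℓ : (0 : ℝ) < ℓ := by exact_mod_cast j.pos
  have hR : 0 ≤ R := le_trans (by positivity) (hrow0 j)
  have hcos (p q : Fin ℓ) : R * (cos (posAngle ℓ p - posAngle ℓ q) - 1) ≤ 0 :=
    mul_nonpos_of_nonneg_of_nonpos hR (by linarith [cos_le_one (posAngle ℓ p - posAngle ℓ q)])
  have hgap (p q : Fin ℓ) (hpq : p ≠ q) :
      R * (cos (posAngle ℓ p - posAngle ℓ q) - 1) ≤ -(R / (2 * ℓ ^ 2)) := by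
    have h := mul_le_mul_of_nonneg_left
      (cos_posAngle_sub_le p.isLt q.isLt (Fin.val_ne_of_ne hpq)) hR
    rw [mul_sub, mul_one, mul_one_div] at h
    linarith
  have hx : a * H 0 j ≤ R / (2 * ℓ ^ 2) :=
    (le_abs_self _).trans ((le_div_iff₀ (by positivity)).2 (by linarith [hrow0 j]))
  rw [selectHead_score hH s τ a R hg v j t]
  by_cases ht : t = τ
  · have hj : j ≠ s := fun h => hjt (by rw [h, ht])
    linarith [hgap j s hj, hcos t τ]
  · linarith [hgap t τ ht, hcos j s]

lemma selectHead_eval {ℓ : ℕ} {H : Matrix (Fin 5) (Fin ℓ) ℝ} (hH : IsEmbedG 0 ℓ H)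
    (s τ : Fin ℓ) {a R g : ℝ} (hg : g ≠ 0) (v : ℝ) (hrow0 : ∀ t, 2 * ℓ ^ 2 * |a * H 0 t| ≤ R) :
    (selectHead ℓ s τ a R g v).eval H = Matrix.single 1 τ (v * H 0 s * relu (a * H 0 s)) := by
  ext i t
  rw [Head.eval_apply_of_score_nonpos _ H
      (fun j t hjt => selectHead_score_nonpos hH hg v hrow0 hjt),
    selectHead_score hH s τ a R hg v s τ, Matrix.single_apply]
  fin_cases i <;> simp [selectHead, Matrix.mul_apply, Fin.sum_univ_five, eq_comm]

lemma selectHead_wnorm_le {ℓ : ℕ} (s τ : Fin ℓ) {a R g v : ℝ} (hg : 0 < g) (ha : |a| ≤ g ^ 2)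
    (hR : 0 ≤ R) (hRg : 2 * R ≤ g ^ 2) (hv : |v| ≤ g) :
    (selectHead ℓ s τ a R g v).wnorm ≤ g := by
  have hdiv {u : ℝ} (hu : |u| ≤ g ^ 2) : |u / g| ≤ g := by
    rw [abs_div, abs_of_pos hg, div_le_iff₀ hg]; linarith
  have htrig {u : ℝ} (hu : |u| ≤ 1) : |R * u / g| ≤ g :=
    hdiv (by rw [abs_mul, abs_of_nonneg hR]; nlinarith [abs_nonneg u])
  have h2R : |-(2 * R) / g| ≤ g := hdiv (by rw [abs_neg, abs_of_nonneg (by linarith)]; exact hRg)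
  refine sup_le (sup_le (matSup_le ?_ hg.le) (matSup_le ?_ hg.le)) (matSup_le ?_ hg.le) <;>
    intro i j <;> fin_cases i <;> fin_cases j <;>
    simp [selectHead, hg.le, abs_of_pos hg, hdiv ha, h2R, htrig (abs_cos_le_one _),
      htrig (abs_sin_le_one _), hv]

def shiftedRow {ι : Type*} [DecidableEq ι] {D ℓ : ℕ} (r : ι) (y : Fin D → ℝ) :
    Matrix ι (Fin ℓ) ℝ :=
  Matrix.of fun i t =>
    if h : i = r ∧ D ≤ (t : ℕ) ∧ (t : ℕ) < 2 * D then y ⟨t - D, by omega⟩ else 0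

lemma shiftedRow_apply_of_ne {ι : Type*} [DecidableEq ι] {D ℓ : ℕ} {r i : ι} (h : i ≠ r)
    (y : Fin D → ℝ) (t : Fin ℓ) : shiftedRow r y i t = 0 := by
  simp [shiftedRow, h]

lemma shiftedRow_add {ι : Type*} [DecidableEq ι] {D ℓ : ℕ} (r : ι) (y z : Fin D → ℝ) :
    (shiftedRow r y + shiftedRow r z : Matrix ι (Fin ℓ) ℝ) = shiftedRow r (y + z) := by
  ext i t
  simp only [shiftedRow, Matrix.add_apply, Matrix.of_apply]
  split_ifs <;> simp

lemma sum_single_eq_shiftedRow {ι : Type*} [DecidableEq ι] {D ℓ : ℕ} (hDℓ : 2 * D ≤ ℓ) (r : ι)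
    (y : Fin D → ℝ) :
    ∑ j : Fin D, Matrix.single r (⟨D + j, by omega⟩ : Fin ℓ) (y j) = shiftedRow r y := by
  ext i t
  simp only [Matrix.sum_apply, Matrix.single_apply, shiftedRow, Matrix.of_apply, Fin.ext_iff]
  split_ifs with h
  · obtain ⟨rfl, h1, h2⟩ := h
    rw [Finset.sum_eq_single ⟨t - D, by omega⟩ (fun j _ hj => if_neg ?_) (by simp)]
    · exact if_pos ⟨rfl, by simp; omega⟩
    · rintro ⟨-, ht⟩
      exact hj (Fin.ext (by simp at ht ⊢; omega))
  · refine Finset.sum_eq_zero fun j _ => if_neg ?_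
    rintro ⟨rfl, ht⟩
    exact h ⟨rfl, by omega⟩

lemma IsEmbedG.add_shiftedRow {ℓ D : ℕ} {H : Matrix (Fin 5) (Fin ℓ) ℝ} (hH : IsEmbedG 0 ℓ H)
    (y : Fin D → ℝ) : IsEmbedG 0 ℓ (H + shiftedRow 1 y) := by
  obtain ⟨h2, h3, h4⟩ := hH.rows
  refine ⟨fun t => ?_, fun t => ?_, fun t => ?_⟩ <;>
    simp [Matrix.add_apply, shiftedRow_apply_of_ne, h2, h3, h4, posAngle]

def copyBlock {D ℓ : ℕ} (w : ℕ) (hDℓ : 2 * D ≤ ℓ) (a R g v : ℝ) : Block 5 D w 6 where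
  heads j := selectHead ℓ ⟨j, by omega⟩ ⟨D + j, by omega⟩ a R g v
  ffn := 0

lemma copyBlock_eval {D ℓ : ℕ} (w : ℕ) (hDℓ : 2 * D ≤ ℓ) {a R g : ℝ} (hg : g ≠ 0) (v : ℝ)
    {G : Matrix (Fin 5) (Fin ℓ) ℝ} (hG : IsEmbedG 0 ℓ G)
    (hrow0 : ∀ t, 2 * ℓ ^ 2 * |a * G 0 t| ≤ R) :
    (copyBlock w hDℓ a R g v).eval G =
      G + shiftedRow 1 fun j : Fin D => v * G 0 ⟨j, by omega⟩ * relu (a * G 0 ⟨j, by omega⟩) := by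
  rw [copyBlock, Block.eval_mk_zero_ffn, add_comm]
  simp only [selectHead_eval hG _ _ hg v hrow0]
  rw [sum_single_eq_shiftedRow hDℓ]

lemma copyBlock_wnorm_le {D ℓ : ℕ} (w : ℕ) (hDℓ : 2 * D ≤ ℓ) {a R g v : ℝ} (hg : 0 < g)
    (ha : |a| ≤ g ^ 2) (hR : 0 ≤ R) (hRg : 2 * R ≤ g ^ 2) (hv : |v| ≤ g) :
    (copyBlock w hDℓ a R g v).wnorm ≤ g :=
  Block.wnorm_le (fun _ => selectHead_wnorm_le _ _ hg ha hR hRg hv) (by simp [copyBlock, hg.le])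
    hg.le

lemma copyBlocks_relay_eval {D ℓ w : ℕ} (hDℓ : 2 * D ≤ ℓ) (hw : 0 < w)
    {H : Matrix (Fin 5) (Fin ℓ) ℝ} (hH : IsEmbed5 H) {lam R g : ℝ} (hlam : 0 < lam)
    (hg : 0 < g) (hR : ∀ t, 2 * ℓ ^ 2 * |lam * H 0 t| ≤ R) :
    (Block.mk (0 : Fin D → Head 5) (FFN.relay 1 g ![1 / (lam * g), -1, 0, 0, 0] : FFN 5 w 6)).eval
        ((copyBlock w hDℓ (-lam) R g (-g)).eval ((copyBlock w hDℓ lam R g g).eval H)) =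
      H + shiftedRow 0 fun j : Fin D => H 0 ⟨j, by omega⟩ ^ 2 := by
  obtain ⟨hrow1, hPE⟩ : (∀ t, H 1 t = 0) ∧ IsEmbedG 0 ℓ H := ⟨hH.1, hH.2⟩
  have hrow0 (z : Fin D → ℝ) (t : Fin ℓ) :
      (H + shiftedRow 1 z : Matrix (Fin 5) (Fin ℓ) ℝ) 0 t = H 0 t := by
    simp [shiftedRow_apply_of_ne]
  have hsum (y : Fin D → ℝ) : (H + shiftedRow 1 fun j => g * y j * relu (lam * y j)) +
      (shiftedRow 1 fun j => -g * y j * relu (-lam * y j)) =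
      H + shiftedRow 1 fun j => lam * g * y j ^ 2 := by
    rw [add_assoc, shiftedRow_add]
    congr 2
    funext j
    simp only [Pi.add_apply, neg_mul]
    linear_combination (g * y j) * relu_sub_relu_neg (lam * y j)
  rw [copyBlock_eval w hDℓ hg.ne' g hPE hR,
    copyBlock_eval w hDℓ hg.ne' (-g) (hPE.add_shiftedRow _) (by simpa [hrow0] using hR)]
  simp only [hrow0]
  rw [hsum, Block.eval_mk_relay hw 1 hg]
  · ext i t
    fin_cases i <;> simp [shiftedRow, hrow1] <;> split_ifs <;> field_simp <;> ring
  · intro t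
    simp [shiftedRow, hrow1]
    split_ifs <;> positivity

theorem exists_blocks_eval_eq_add_shiftedRow_sq {D ℓ : ℕ} (hDℓ : 2 * D ≤ ℓ)
    {H : Matrix (Fin 5) (Fin ℓ) ℝ} (hH : IsEmbed5 H) {b : ℝ} (hb : 0 < b) :
    ∃ (w : ℕ) (B₁ B₂ B₃ : Block 5 D w 6), B₁.wnorm ≤ b ∧ B₂.wnorm ≤ b ∧ B₃.wnorm ≤ b ∧
      B₃.eval (B₂.eval (B₁.eval H)) = H + shiftedRow 0 fun j : Fin D => H 0 ⟨j, by omega⟩ ^ 2 := by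
  set M := matSup H
  have hM : 0 ≤ M := Real.iSup_nonneg fun _ => Real.iSup_nonneg fun _ => abs_nonneg _
  set lam := b ^ 2 / (4 * ℓ ^ 2 * M + 1)
  have hlam : 0 < lam := by positivity
  have hlamb : lam * (4 * ℓ ^ 2 * M + 1) = b ^ 2 := div_mul_cancel₀ _ (by positivity)
  have hR : 0 ≤ 2 * ℓ ^ 2 * lam * M := by positivity
  have hlam_le : lam ≤ b ^ 2 := by nlinarith
  have hR_le : 2 * (2 * ℓ ^ 2 * lam * M) ≤ b ^ 2 := by nlinarith
  obtain ⟨w, hw, hrelay⟩ :=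
    FFN.exists_relay_wnorm_le (L := 6) 1 hb ![1 / (lam * b), -1, 0, 0, 0]
  refine ⟨w, copyBlock w hDℓ lam (2 * ℓ ^ 2 * lam * M) b b,
    copyBlock w hDℓ (-lam) (2 * ℓ ^ 2 * lam * M) b (-b), ⟨0, FFN.relay 1 b _⟩,
    copyBlock_wnorm_le w hDℓ hb (by rwa [abs_of_pos hlam]) hR hR_le (by rw [abs_of_pos hb]),
    copyBlock_wnorm_le w hDℓ hb (by rwa [abs_neg, abs_of_pos hlam]) hR hR_le
      (by rw [abs_neg, abs_of_pos hb]),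
    Block.wnorm_le (fun _ => by simp [hb.le]) hrelay hb.le,
    copyBlocks_relay_eval hDℓ hw hH hlam hb fun t => ?_⟩
  rw [abs_mul, abs_of_pos hlam, ← mul_assoc]
  exact mul_le_mul_of_nonneg_left (le_matSup H 0 t) (by positivity)

/-- Lemma: componentwise squaring implemented by three transformer
blocks. -/
theorem squaring :
    ∃ C : ℝ, 0 < C ∧
      ∀ (D ℓ : ℕ), 2 * D ≤ ℓ →
      ∀ M : ℝ, 0 < M →
      ∀ x : Fin D → ℝ, supNorm x ≤ M →
      ∀ H : Matrix (Fin 5) (Fin ℓ) ℝ, IsEmbed5 H →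
        (∀ t : Fin ℓ, ∀ h : (t : ℕ) < D, H 0 t = x ⟨(t : ℕ), h⟩) →
        (∀ t : Fin ℓ, D ≤ (t : ℕ) → H 0 t = 0) →
        ∃ (w : ℕ) (B₁ B₂ B₃ : Block 5 D w 6),
          B₁.wnorm ≤ C * (ℓ : ℝ) ^ 2 * M ^ 2 * matSup H ^ 2 ∧
          B₂.wnorm ≤ C * (ℓ : ℝ) ^ 2 * M ^ 2 * matSup H ^ 2 ∧
          B₃.wnorm ≤ C * (ℓ : ℝ) ^ 2 * M ^ 2 * matSup H ^ 2 ∧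
          B₃.eval (B₂.eval (B₁.eval H)) = Matrix.of fun (i : Fin 5) (t : Fin ℓ) =>
            if h : D ≤ (t : ℕ) ∧ (t : ℕ) < 2 * D then
              (if i = 0 then x ⟨(t : ℕ) - D, by omega⟩ ^ 2 else H i t)
            else H i t := by
  refine ⟨1, one_pos, fun D ℓ hDℓ M hM x _ H hH hx hzero => ?_⟩
  have htarget : (Matrix.of fun (i : Fin 5) (t : Fin ℓ) =>
      if h : D ≤ (t : ℕ) ∧ (t : ℕ) < 2 * D then
        (if i = 0 then x ⟨(t : ℕ) - D, by omega⟩ ^ 2 else H i t)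
      else H i t) = H + shiftedRow 0 fun j : Fin D => H 0 ⟨j, by omega⟩ ^ 2 := by
    ext i t
    simp only [shiftedRow, Matrix.add_apply, Matrix.of_apply]
    by_cases h : D ≤ (t : ℕ) ∧ (t : ℕ) < 2 * D
    · rcases eq_or_ne i 0 with rfl | hi
      · simp [h, hzero t h.1, hx ⟨t - D, by omega⟩ (by simp; omega)]
      · simp [h, hi]
    · simp [h]
  rw [htarget]
  rcases Nat.eq_zero_or_pos D with rfl | hD
  · have hB : (⟨0, 0⟩ : Block 5 0 0 6).wnorm ≤ 1 * (ℓ : ℝ) ^ 2 * M ^ 2 * matSup H ^ 2 :=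
      Block.wnorm_le (fun j => j.elim0) (FFN.wnorm_zero.trans_le (by positivity)) (by positivity)
    refine ⟨0, ⟨0, 0⟩, ⟨0, 0⟩, ⟨0, 0⟩, hB, hB, hB, ?_⟩
    ext i t
    simp [Block.eval_mk_zero_ffn, shiftedRow]
  · have hS : 1 ≤ matSup H := by
      simpa [hH.2.2.2 ⟨0, by omega⟩] using le_matSup H 4 ⟨0, by omega⟩
    have hℓ : (0 : ℝ) < ℓ := by exact_mod_cast (show 0 < ℓ by omega)
    exact exists_blocks_eval_eq_add_shiftedRow_sq hDℓ hH (by positivity)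

end
end Paper
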